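/- arXiv:1211.2894 — 4 statements merged into one kernel-verified Lean document; each statement's English description precedes it below -/
import Mathlib

section
/- Let F be a pseudo-finite field realized as an ultraproduct of finite fields, with algebraic closure K and Frobenius map Frob_F: K → K (the ultralimit of the maps x ↦ x^{|F_n|}). If V ⊆ Kⁿ is an affine variety invariant under the coordinatewise action of Frob_F, then V can be cut out by polynomials with coefficients in F, i.e., V is defined over F. -/
open MvPolynomial

section Aux

variable {K : Type*} [Field K] {σ : Type*}

private lemma phi_eval (φ : K ≃+* K) (z : σ → K) (q : MvPolynomial σ K) :
    MvPolynomial.eval (fun i => φ (z i)) (MvPolynomial.map (φ : K →+* K) q)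
      = φ (MvPolynomial.eval z q) := by
  rw [eval_map]
  have h := MvPolynomial.eval₂_comp_left (φ : K →+* K) (RingHom.id K) z q
  rw [RingHom.comp_id] at h
  exact h.symm

/-- Core descent lemma: a `φ`-stable subspace of polynomials with supports contained in a
fixed finite set `S` admits a "reduced echelon" family of `φ`-fixed elements. -/
private lemma descent_aux (φ : K ≃+* K) (S : Finset (σ →₀ ℕ)) :
    ∀ (W : Submodule K (MvPolynomial σ K)),
    (∀ q ∈ W, q.support ⊆ S) →
    (∀ q ∈ W, MvPolynomial.map (φ : K →+* K) q ∈ W) →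
    ∃ (P : Finset (σ →₀ ℕ)) (u : (σ →₀ ℕ) → MvPolynomial σ K),
      P ⊆ S ∧
      (∀ p ∈ P, u p ∈ W) ∧
      (∀ p ∈ P, ∀ m, φ (coeff m (u p)) = coeff m (u p)) ∧
      (∀ p ∈ P, coeff p (u p) = 1) ∧
      (∀ p ∈ P, ∀ p' ∈ P, p' ≠ p → coeff p' (u p) = 0) ∧
      (∀ q ∈ W, (∀ p ∈ P, coeff p q = 0) → q = 0) := by
  classical
  induction S using Finset.strongInduction with
  | _ S ih =>
    intro W hsupp hstab
    rcases S.eq_empty_or_nonempty with rfl | ⟨m, hm⟩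
    · refine ⟨∅, fun _ => 0, Finset.Subset.refl _, by simp, by simp, by simp, by simp, ?_⟩
      intro q hq _
      have := Finset.subset_empty.mp (hsupp q hq)
      simpa [MvPolynomial.support_eq_empty] using this
    · by_cases hb : ∃ u₀ ∈ W, coeff m u₀ ≠ 0
      · obtain ⟨u₀, hu₀W, hu₀⟩ := hb
        set u₁ : MvPolynomial σ K := (coeff m u₀)⁻¹ • u₀ with hu₁def
        have hu₁W : u₁ ∈ W := W.smul_mem _ hu₀W
        have hu₁m : coeff m u₁ = 1 := by
          simp [hu₁def, MvPolynomial.coeff_smul, inv_mul_cancel₀ hu₀]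
        -- the subspace of elements with zero coefficient at m
        set W₀ : Submodule K (MvPolynomial σ K) :=
          W ⊓ LinearMap.ker (MvPolynomial.lcoeff K m) with hW₀def
        have hW₀mem : ∀ q, q ∈ W₀ ↔ q ∈ W ∧ coeff m q = 0 := by
          intro q; simp [hW₀def, MvPolynomial.lcoeff]
        have hW₀supp : ∀ q ∈ W₀, q.support ⊆ S.erase m := by
          intro q hq
          rcases (hW₀mem q).mp hq with ⟨hqW, hqm⟩
          intro a ha
          refine Finset.mem_erase.mpr ⟨?_, hsupp q hqW ha⟩
          rintro rfl
          exact (MvPolynomial.mem_support_iff.mp ha) hqm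
        have hW₀stab : ∀ q ∈ W₀, MvPolynomial.map (φ : K →+* K) q ∈ W₀ := by
          intro q hq
          rcases (hW₀mem q).mp hq with ⟨hqW, hqm⟩
          refine (hW₀mem _).mpr ⟨hstab q hqW, ?_⟩
          simp [MvPolynomial.coeff_map, hqm]
        obtain ⟨P₀, u, hP₀S, huW, hurat, hudiag, huoff, huzero⟩ :=
          ih (S.erase m) (Finset.erase_ssubset hm) W₀ hW₀supp hW₀stab
        have hmP₀ : m ∉ P₀ := fun h => (Finset.mem_erase.mp (hP₀S h)).1 rfl
        have huW' : ∀ p ∈ P₀, u p ∈ W := fun p hp => ((hW₀mem _).mp (huW p hp)).1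
        have huc : ∀ p ∈ P₀, coeff m (u p) = 0 :=
          fun p hp => ((hW₀mem _).mp (huW p hp)).2
        -- reduce u₁ against the echelon family
        set v : MvPolynomial σ K := u₁ - ∑ p ∈ P₀, coeff p u₁ • u p with hvdef
        have hsumW₀ : (∑ p ∈ P₀, coeff p u₁ • u p) ∈ W₀ :=
          Submodule.sum_mem _ (fun p hp => W₀.smul_mem _ (huW p hp))
        have hvW : v ∈ W := W.sub_mem hu₁W ((hW₀mem _).mp hsumW₀).1
        have hcoeffsum : ∀ p' ∈ P₀,
            coeff p' (∑ p ∈ P₀, coeff p u₁ • u p) = coeff p' u₁ := by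
          intro p' hp'
          rw [MvPolynomial.coeff_sum, Finset.sum_eq_single p']
          · simp [MvPolynomial.coeff_smul, hudiag p' hp']
          · intro b hb hbne
            simp [MvPolynomial.coeff_smul, huoff b hb p' hp' (Ne.symm hbne)]
          · intro h; exact absurd hp' h
        have hvm : coeff m v = 1 := by
          have h0 : coeff m (∑ p ∈ P₀, coeff p u₁ • u p) = 0 :=
            ((hW₀mem _).mp hsumW₀).2
          simp [hvdef, MvPolynomial.coeff_sub, h0, hu₁m]
        have hvP₀ : ∀ p' ∈ P₀, coeff p' v = 0 := by
          intro p' hp'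
          simp [hvdef, MvPolynomial.coeff_sub, hcoeffsum p' hp']
        -- v is φ-fixed
        have hvfix : MvPolynomial.map (φ : K →+* K) v = v := by
          have hdW : MvPolynomial.map (φ : K →+* K) v - v ∈ W₀ := by
            refine (hW₀mem _).mpr ⟨W.sub_mem (hstab v hvW) hvW, ?_⟩
            simp [MvPolynomial.coeff_sub, MvPolynomial.coeff_map, hvm]
          have hz : ∀ p ∈ P₀, coeff p (MvPolynomial.map (φ : K →+* K) v - v) = 0 := by
            intro p hp
            simp [MvPolynomial.coeff_sub, MvPolynomial.coeff_map, hvP₀ p hp]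
          have h0 := huzero _ hdW hz
          exact sub_eq_zero.mp h0
        have hvrat : ∀ m', φ (coeff m' v) = coeff m' v := by
          intro m'
          have := congrArg (coeff m') hvfix
          simpa [MvPolynomial.coeff_map] using this
        -- assemble the new family
        refine ⟨insert m P₀, Function.update u m v, ?_, ?_, ?_, ?_, ?_, ?_⟩
        · intro p hp
          rcases Finset.mem_insert.mp hp with rfl | hp
          · exact hm
          · exact Finset.mem_of_mem_erase (hP₀S hp)
        · intro p hp
          rcases Finset.mem_insert.mp hp with rfl | hpP
          · simpa [Function.update_self] using hvW
          · have hne : p ≠ m := fun h => hmP₀ (by rwa [h] at hpP)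
            rw [Function.update_of_ne hne]
            exact huW' p hpP
        · intro p hp m'
          rcases Finset.mem_insert.mp hp with rfl | hpP
          · simpa [Function.update_self] using hvrat m'
          · have hne : p ≠ m := fun h => hmP₀ (by rwa [h] at hpP)
            rw [Function.update_of_ne hne]
            exact hurat p hpP m'
        · intro p hp
          rcases Finset.mem_insert.mp hp with rfl | hpP
          · simpa [Function.update_self] using hvm
          · have hne : p ≠ m := fun h => hmP₀ (by rwa [h] at hpP)
            rw [Function.update_of_ne hne]
            exact hudiag p hpP
        · intro p hp p' hp' hne
          rcases Finset.mem_insert.mp hp with rfl | hpP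
          · rw [Function.update_self]
            rcases Finset.mem_insert.mp hp' with h | hp'P
            · exact absurd h hne
            · exact hvP₀ p' hp'P
          · have hnem : p ≠ m := fun h => hmP₀ (by rwa [h] at hpP)
            rw [Function.update_of_ne hnem]
            rcases Finset.mem_insert.mp hp' with h | hp'P
            · rw [h]; exact huc p hpP
            · exact huoff p hpP p' hp'P hne
        · intro q hqW hq
          have hqm : coeff m q = 0 := hq m (Finset.mem_insert_self _ _)
          refine huzero q ((hW₀mem q).mpr ⟨hqW, hqm⟩) ?_
          intro p hp
          exact hq p (Finset.mem_insert_of_mem hp)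
      · -- no element of W has nonzero coefficient at m
        push_neg at hb
        have hsupp' : ∀ q ∈ W, q.support ⊆ S.erase m := by
          intro q hq a ha
          refine Finset.mem_erase.mpr ⟨?_, hsupp q hq ha⟩
          rintro rfl
          exact (MvPolynomial.mem_support_iff.mp ha) (hb q hq)
        obtain ⟨P, u, hPS, h1, h2, h3, h4, h5⟩ :=
          ih (S.erase m) (Finset.erase_ssubset hm) W hsupp' hstab
        exact ⟨P, u, hPS.trans (Finset.erase_subset _ _), h1, h2, h3, h4, h5⟩

end Aux

/-- Galois descent via the Frobenius: let `K` be an algebraically closed field (the algebraic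
closure of a pseudo-finite field `F`), `φ : K ≃+* K` the (nonstandard) Frobenius map, and
`F` the subfield of fixed points of `φ`.  If an affine variety `V ⊆ Kⁿ` is invariant under
the coordinatewise action of `φ`, then `V` can be cut out by polynomials all of whose
coefficients lie in `F`, i.e. `V` is defined over `F`. -/
theorem stmt_2 {K : Type*} [Field K] [IsAlgClosed K] {n : ℕ}
    (φ : K ≃+* K) (F : Subfield K) (hF : ∀ x : K, x ∈ F ↔ φ x = x)
    (V : Set (Fin n → K))
    (hVvar : ∃ I : Set (MvPolynomial (Fin n) K),
      V = {x | ∀ p ∈ I, MvPolynomial.eval x p = 0})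
    (hVinv : (fun x : Fin n → K => fun i => φ (x i)) '' V = V) :
    ∃ J : Set (MvPolynomial (Fin n) K),
      (∀ p ∈ J, ∀ m : Fin n →₀ ℕ, MvPolynomial.coeff m p ∈ F) ∧
      V = {x | ∀ p ∈ J, MvPolynomial.eval x p = 0} := by
  classical
  obtain ⟨I, hI⟩ := hVvar
  -- J : all polynomials vanishing on V with coefficients in F
  refine ⟨{q | (∀ y ∈ V, MvPolynomial.eval y q = 0) ∧ ∀ m, coeff m q ∈ F},
    fun p hp m => hp.2 m, ?_⟩
  apply Set.eq_of_subset_of_subset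
  · intro x hx q hq
    exact hq.1 x hx
  · intro x hx
    rw [hI]
    intro p hpI
    -- the φ-stable subspace of polynomials vanishing on V with support ⊆ p.support
    set S : Finset (Fin n →₀ ℕ) := p.support with hSdef
    set W : Submodule K (MvPolynomial (Fin n) K) :=
      { carrier := {q | (∀ y ∈ V, MvPolynomial.eval y q = 0) ∧ q.support ⊆ S}
        add_mem' := by
          rintro a b ⟨ha1, ha2⟩ ⟨hb1, hb2⟩
          refine ⟨fun y hy => by simp [ha1 y hy, hb1 y hy], ?_⟩
          exact (MvPolynomial.support_add).trans (Finset.union_subset ha2 hb2)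
        zero_mem' := ⟨fun y _ => by simp, by simp⟩
        smul_mem' := by
          rintro c a ⟨ha1, ha2⟩
          refine ⟨fun y hy => by simp [MvPolynomial.smul_eval, ha1 y hy], ?_⟩
          exact (MvPolynomial.support_smul).trans ha2 } with hWdef
    have hWmem : ∀ q, q ∈ W ↔
        (∀ y ∈ V, MvPolynomial.eval y q = 0) ∧ q.support ⊆ S := fun q => Iff.rfl
    have hWsupp : ∀ q ∈ W, q.support ⊆ S := fun q hq => ((hWmem q).mp hq).2
    have hWstab : ∀ q ∈ W, MvPolynomial.map (φ : K →+* K) q ∈ W := by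
      intro q hq
      rcases (hWmem q).mp hq with ⟨hq1, hq2⟩
      refine (hWmem _).mpr ⟨?_, (MvPolynomial.support_map_subset _ _).trans hq2⟩
      intro y hy
      have : y ∈ (fun x : Fin n → K => fun i => φ (x i)) '' V := by
        rw [hVinv]; exact hy
      obtain ⟨z, hzV, hzy⟩ := this
      rw [← hzy, phi_eval φ z q, hq1 z hzV, map_zero]
    have hpW : p ∈ W := by
      refine (hWmem p).mpr ⟨?_, le_refl _⟩
      intro y hy
      rw [hI] at hy
      exact hy p hpI
    obtain ⟨P, u, hPS, huW, hurat, hudiag, huoff, huzero⟩ :=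
      descent_aux φ S W hWsupp hWstab
    -- p is a K-linear combination of the φ-fixed elements u m, m ∈ P
    have hrep : p = ∑ m ∈ P, coeff m p • u m := by
      have hdiff : p - ∑ m ∈ P, coeff m p • u m ∈ W :=
        W.sub_mem hpW (Submodule.sum_mem _ (fun m hm => W.smul_mem _ (huW m hm)))
      have hz : ∀ m ∈ P, coeff m (p - ∑ m' ∈ P, coeff m' p • u m') = 0 := by
        intro m hm
        rw [MvPolynomial.coeff_sub, MvPolynomial.coeff_sum, Finset.sum_eq_single m]
        · simp [MvPolynomial.coeff_smul, hudiag m hm]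
        · intro b hb hbne
          simp [MvPolynomial.coeff_smul, huoff b hb m hm (Ne.symm hbne)]
        · intro h; exact absurd hm h
      have := huzero _ hdiff hz
      exact sub_eq_zero.mp this
    -- each u m lies in J, so x kills it
    have hux : ∀ m ∈ P, MvPolynomial.eval x (u m) = 0 := by
      intro m hm
      refine hx (u m) ?_
      exact ⟨fun y hy => (((hWmem _).mp (huW m hm)).1) y hy,
        fun m' => (hF _).mpr (hurat m hm m')⟩
    have hev := congrArg (MvPolynomial.eval x) hrep
    rw [map_sum] at hev
    rw [hev]
    refine Finset.sum_eq_zero fun m hm => ?_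
    rw [MvPolynomial.smul_eval, hux m hm, mul_zero]
end

section
/- Double Cauchy–Schwarz bound: let V, W, U be finite nonempty sets, P: V × W → U a function, f: U → ℝ with |f| ≤ 1, and A ⊆ V, B ⊆ W. Then |Σ_{v∈A} Σ_{w∈B} f(P(v,w))| ≤ |A|^{1/2} |B|^{1/2} · |Σ_{v,v'∈V} Σ_{w,w'∈W} f(P(v,w)) f(P(v,w')) f(P(v',w)) f(P(v',w'))|^{1/4}. -/
open Finset


private lemma sum_swap3' {α β γ M : Type*} [AddCommMonoid M] {s : Finset α} {t : Finset β}
    {u : Finset γ} (g : α → β → γ → M) :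
    ∑ a ∈ s, ∑ b ∈ t, ∑ c ∈ u, g a b c = ∑ b ∈ t, ∑ c ∈ u, ∑ a ∈ s, g a b c :=
  calc ∑ a ∈ s, ∑ b ∈ t, ∑ c ∈ u, g a b c
      = ∑ b ∈ t, ∑ a ∈ s, ∑ c ∈ u, g a b c := Finset.sum_comm
    _ = ∑ b ∈ t, ∑ c ∈ u, ∑ a ∈ s, g a b c :=
      Finset.sum_congr rfl fun b _ => Finset.sum_comm

private lemma sum_swap4' {α β M : Type*} [AddCommMonoid M] {s s' : Finset α} {t t' : Finset β}
    (g : α → α → β → β → M) :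
    ∑ v ∈ s, ∑ v' ∈ s', ∑ w ∈ t, ∑ w' ∈ t', g v v' w w'
      = ∑ w ∈ t, ∑ w' ∈ t', ∑ v ∈ s, ∑ v' ∈ s', g v v' w w' :=
  calc ∑ v ∈ s, ∑ v' ∈ s', ∑ w ∈ t, ∑ w' ∈ t', g v v' w w'
      = ∑ v ∈ s, ∑ w ∈ t, ∑ w' ∈ t', ∑ v' ∈ s', g v v' w w' :=
        Finset.sum_congr rfl fun v _ => sum_swap3' (g v)
    _ = ∑ w ∈ t, ∑ w' ∈ t', ∑ v ∈ s, ∑ v' ∈ s', g v v' w w' :=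
        sum_swap3' fun v w w' => ∑ v' ∈ s', g v v' w w'

/-- Double Cauchy–Schwarz bound: for finite nonempty sets `V, W, U`, a map `P : V × W → U`,
a function `f : U → ℝ` with `|f| ≤ 1`, and subsets `A ⊆ V`, `B ⊆ W`, one has
`|Σ_{v∈A} Σ_{w∈B} f(P(v,w))| ≤ |A|^{1/2} |B|^{1/2} ·
  |Σ_{v,v'∈V} Σ_{w,w'∈W} f(P(v,w)) f(P(v,w')) f(P(v',w)) f(P(v',w'))|^{1/4}`. -/
theorem stmt_6 {V W U : Type*} [Fintype V] [Fintype W] [Fintype U]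
    [Nonempty V] [Nonempty W] [Nonempty U]
    (P : V → W → U) (f : U → ℝ) (hf : ∀ u, |f u| ≤ 1)
    (A : Finset V) (B : Finset W) :
    |∑ v ∈ A, ∑ w ∈ B, f (P v w)| ≤
      (A.card : ℝ) ^ ((1 : ℝ) / 2) * (B.card : ℝ) ^ ((1 : ℝ) / 2) *
        |∑ v : V, ∑ v' : V, ∑ w : W, ∑ w' : W,
            f (P v w) * f (P v w') * f (P v' w) * f (P v' w')| ^ ((1 : ℝ) / 4) := by
  set S := ∑ v ∈ A, ∑ w ∈ B, f (P v w) with hS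
  set h : W → W → ℝ := fun w w' => ∑ v : V, f (P v w) * f (P v w') with hh
  set T := ∑ v : V, ∑ v' : V, ∑ w : W, ∑ w' : W,
      f (P v w) * f (P v w') * f (P v' w) * f (P v' w') with hT
  -- T equals the sum of squares of h over all of W × W
  have hT_eq : T = ∑ w : W, ∑ w' : W, (h w w') ^ 2 := by
    rw [hT]
    have key : ∀ w w' : W, (h w w') ^ 2
        = ∑ v : V, ∑ v' : V, f (P v w) * f (P v w') * f (P v' w) * f (P v' w') := by
      intro w w'
      rw [sq, hh, Finset.sum_mul_sum]
      exact Finset.sum_congr rfl fun v _ => Finset.sum_congr rfl fun v' _ => by ring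
    simp only [key]
    exact sum_swap4' fun v v' w w' => f (P v w) * f (P v w') * f (P v' w) * f (P v' w')
  have hT_nonneg : 0 ≤ T := by rw [hT_eq]; positivity
  -- step 1: Cauchy–Schwarz in v
  set Q := ∑ v : V, (∑ w ∈ B, f (P v w)) ^ 2 with hQ
  have hQ_nonneg : 0 ≤ Q := by rw [hQ]; positivity
  have cs1 : S ^ 2 ≤ (A.card : ℝ) * Q := by
    calc S ^ 2 ≤ (A.card : ℝ) * ∑ v ∈ A, (∑ w ∈ B, f (P v w)) ^ 2 :=
          sq_sum_le_card_mul_sum_sq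
      _ ≤ (A.card : ℝ) * Q := by
          apply mul_le_mul_of_nonneg_left _ (by positivity)
          exact Finset.sum_le_sum_of_subset_of_nonneg (Finset.subset_univ A)
            fun i _ _ => by positivity
  -- Q as a double sum of h over B × B
  have hQ_eq : Q = ∑ p ∈ B ×ˢ B, h p.1 p.2 := by
    rw [hQ, Finset.sum_product]
    simp only [sq, Finset.sum_mul_sum, hh]
    exact sum_swap3' fun v w w' => f (P v w) * f (P v w')
  -- step 2: Cauchy–Schwarz in (w, w')
  have cs2 : Q ^ 2 ≤ (B.card : ℝ) ^ 2 * T := by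
    calc Q ^ 2 ≤ ((B ×ˢ B).card : ℝ) * ∑ p ∈ B ×ˢ B, (h p.1 p.2) ^ 2 := by
          rw [hQ_eq]; exact sq_sum_le_card_mul_sum_sq
      _ ≤ ((B ×ˢ B).card : ℝ) * ∑ p : W × W, (h p.1 p.2) ^ 2 := by
          apply mul_le_mul_of_nonneg_left _ (by positivity)
          exact Finset.sum_le_sum_of_subset_of_nonneg (Finset.subset_univ _)
            fun i _ _ => by positivity
      _ = (B.card : ℝ) ^ 2 * T := by
          rw [Finset.card_product, hT_eq, Fintype.sum_prod_type]
          push_cast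
          ring
  -- combine: S ^ 4 ≤ A.card ^ 2 * B.card ^ 2 * T
  have key : S ^ 4 ≤ (A.card : ℝ) ^ 2 * (B.card : ℝ) ^ 2 * T := by
    have h1 : (S ^ 2) ^ 2 ≤ ((A.card : ℝ) * Q) ^ 2 :=
      pow_le_pow_left₀ (sq_nonneg S) cs1 2
    calc S ^ 4 = (S ^ 2) ^ 2 := by ring
      _ ≤ ((A.card : ℝ) * Q) ^ 2 := h1
      _ = (A.card : ℝ) ^ 2 * Q ^ 2 := by ring
      _ ≤ (A.card : ℝ) ^ 2 * ((B.card : ℝ) ^ 2 * T) :=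
          mul_le_mul_of_nonneg_left cs2 (by positivity)
      _ = (A.card : ℝ) ^ 2 * (B.card : ℝ) ^ 2 * T := by ring
  -- translate to rpow
  have habs : |S| = (S ^ 4) ^ ((1 : ℝ) / 4) := by
    have : S ^ 4 = |S| ^ 4 := by rw [pow_abs, abs_of_nonneg (by positivity)]
    rw [this, ← Real.rpow_natCast |S| 4, ← Real.rpow_mul (abs_nonneg S)]
    norm_num
  rw [habs, abs_of_nonneg hT_nonneg]
  have step : (S ^ 4) ^ ((1 : ℝ) / 4)
      ≤ ((A.card : ℝ) ^ 2 * (B.card : ℝ) ^ 2 * T) ^ ((1 : ℝ) / 4) :=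
    Real.rpow_le_rpow (by positivity) key (by norm_num)
  refine step.trans_eq ?_
  rw [Real.mul_rpow (by positivity) hT_nonneg, Real.mul_rpow (by positivity) (by positivity)]
  congr 1
  congr 1
  · rw [← Real.rpow_natCast (A.card : ℝ) 2, ← Real.rpow_mul (by positivity)]
    norm_num
  · rw [← Real.rpow_natCast (B.card : ℝ) 2, ← Real.rpow_mul (by positivity)]
    norm_num
end

section
/- Let f be a rational function on ℂ, not identically zero, all of whose poles have zero residue. Then f has a primitive F which is itself a rational function, F is non-constant, and the image of the map a ↦ F(a) (over points where F is defined) omits at most one complex value; i.e., for every z ∈ ℂ with at most one exception, there exists a ∈ ℂ with F(a) = z. -/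
/-!
Induct on the degree of the denominator. A polynomial has a polynomial primitive. At a pole `a`
of order `k` of `f`, Cauchy's integral formula computes the small circle integrals of `f` when
`k = 1` and shows they do not vanish, so `k ≥ 2`; then adding the derivative of a suitable
`c / (X - a) ^ (k - 1)` to `f` lowers the order of the pole, preserves the residue condition
(a derivative integrates to zero over every circle avoiding its poles) and so reduces to a smaller
denominator. Since `F' = f ≠ 0`, `F` is not constant. Finally `F` omits the value `z` only if
`F.num - z • F.denom` is a constant polynomial, and for two distinct values `z` this forces
`F.denom` and then `F.num` to be constant.
-/

open Filter Topology Polynomial Metric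

universe u

theorem Polynomial.exists_derivative_eq {K : Type*} [Field K] [CharZero K] (p : K[X]) :
    ∃ P : K[X], derivative P = p := by
  induction p using Polynomial.induction_on' with
  | add p q hp hq =>
    obtain ⟨P, rfl⟩ := hp
    obtain ⟨Q, rfl⟩ := hq
    exact ⟨P + Q, derivative_add⟩
  | monomial n a =>
    refine ⟨monomial (n + 1) (a / (n + 1)), ?_⟩
    rw [derivative_monomial, Nat.add_sub_cancel]
    congr 1
    push_cast
    field_simp

theorem eventually_nhdsGT_ne {α : Type*} [Preorder α] [TopologicalSpace α] [T1Space α]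
    (a x : α) : ∀ᶠ y in 𝓝[>] a, y ≠ x := by
  rcases eq_or_ne x a with rfl | hx
  · exact eventually_mem_nhdsWithin.mono fun y hy ↦ ne_of_gt hy
  · exact nhdsWithin_le_nhds (eventually_ne_nhds hx.symm)

theorem Polynomial.eventually_forall_mem_sphere_eval_ne_zero {q : ℂ[X]} (hq : q ≠ 0) (a : ℂ) :
    ∀ᶠ R in 𝓝[>] (0 : ℝ), ∀ z ∈ sphere a R, q.eval z ≠ 0 := by
  have h : ∀ r ∈ q.roots.toFinset, ∀ᶠ R in 𝓝[>] (0 : ℝ), R ≠ dist r a :=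
    fun r _ ↦ eventually_nhdsGT_ne _ _
  filter_upwards [(eventually_all_finset _).2 h] with R hR z hz hqz
  exact hR z (by simp [hq, hqz]) (mem_sphere.1 hz).symm

namespace RatFunc

section Field

variable {K : Type u} [Field K]

noncomputable def derivative (x : RatFunc K) : RatFunc K :=
  algebraMap K[X] (RatFunc K) (x.num.derivative * x.denom - x.num * x.denom.derivative) /
    algebraMap K[X] (RatFunc K) (x.denom ^ 2)

theorem derivative_div_algebraMap (p : K[X]) {q : K[X]} (hq : q ≠ 0) :
    derivative (algebraMap K[X] (RatFunc K) p / algebraMap K[X] (RatFunc K) q) =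
      algebraMap K[X] (RatFunc K) (p.derivative * q - p * q.derivative) /
        algebraMap K[X] (RatFunc K) (q ^ 2) := by
  set x := algebraMap K[X] (RatFunc K) p / algebraMap K[X] (RatFunc K) q
  have hcross : x.num * q = p * x.denom := (num_mul_eq_mul_denom_iff hq).mpr rfl
  have hcross' := congrArg Polynomial.derivative hcross
  simp only [Polynomial.derivative_mul] at hcross'
  rw [derivative, div_eq_div_iff (algebraMap_ne_zero (pow_ne_zero 2 (denom_ne_zero x)))
    (algebraMap_ne_zero (pow_ne_zero 2 hq)), ← map_mul, ← map_mul]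
  congr 1
  linear_combination
    (q * x.denom) * hcross' - (q * x.denom.derivative + q.derivative * x.denom) * hcross

theorem derivative_algebraMap (p : K[X]) :
    derivative (algebraMap K[X] (RatFunc K) p) = algebraMap K[X] (RatFunc K) p.derivative := by
  simpa using derivative_div_algebraMap p one_ne_zero

theorem derivative_C (c : K) : derivative (C c) = 0 := by
  rw [← algebraMap_C, derivative_algebraMap, Polynomial.derivative_C, map_zero]

theorem derivative_sub (x y : RatFunc K) : derivative (x - y) = derivative x - derivative y := by
  have hx := algebraMap_ne_zero (denom_ne_zero x)
  have hy := algebraMap_ne_zero (denom_ne_zero y)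
  have hxy : x - y = algebraMap K[X] (RatFunc K) (x.num * y.denom - x.denom * y.num) /
      algebraMap K[X] (RatFunc K) (x.denom * y.denom) := by
    conv_lhs => rw [← num_div_denom x, ← num_div_denom y]
    rw [div_sub_div _ _ hx hy, map_sub, map_mul, map_mul, map_mul]
  rw [hxy, derivative_div_algebraMap _ (mul_ne_zero (denom_ne_zero x) (denom_ne_zero y)),
    derivative, derivative]
  simp only [map_sub, map_mul, map_pow, Polynomial.derivative_mul, map_add]
  field_simp
  ring

theorem eval_div_algebraMap {L : Type u} [Field L] (f : K →+* L) (a : L) (p : K[X]) {q : K[X]}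
    (hq : q.eval₂ f a ≠ 0) :
    eval f a (algebraMap K[X] (RatFunc K) p / algebraMap K[X] (RatFunc K) q) =
      p.eval₂ f a / q.eval₂ f a := by
  set x := algebraMap K[X] (RatFunc K) p / algebraMap K[X] (RatFunc K) q
  have hq0 : q ≠ 0 := by rintro rfl; simp at hq
  have hcross : x.num * q = p * x.denom := (num_mul_eq_mul_denom_iff hq0).mpr rfl
  have hx : x.denom.eval₂ f a ≠ 0 := fun h ↦
    hq (eval₂_eq_zero_of_dvd_of_eval₂_eq_zero f a (denom_div_dvd p q) h)
  rw [eval, div_eq_div_iff hx hq, ← eval₂_mul, ← eval₂_mul, hcross]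

theorem eval_num_ne_zero_of_eval_denom_eq_zero (x : RatFunc K) {a : K}
    (h : x.denom.eval a = 0) : x.num.eval a ≠ 0 := by
  intro h'
  have := (isCoprime_num_denom x).map (Polynomial.evalRingHom a)
  simp [h, h'] at this

theorem exists_eq_C_of_natDegree_eq_zero {F : RatFunc K} {z w : K} (hzw : z ≠ w)
    (hz : (F.num - Polynomial.C z * F.denom).natDegree = 0)
    (hw : (F.num - Polynomial.C w * F.denom).natDegree = 0) : ∃ c, F = C c := by
  have hdenom : F.denom = 1 := by
    refine (monic_denom F).natDegree_eq_zero.mp ?_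
    have h := natDegree_sub_le (F.num - Polynomial.C z * F.denom)
      (F.num - Polynomial.C w * F.denom)
    rwa [hz, hw, show F.num - Polynomial.C z * F.denom - (F.num - Polynomial.C w * F.denom) =
      Polynomial.C (w - z) * F.denom by rw [Polynomial.C_sub]; ring,
      natDegree_C_mul (sub_ne_zero.2 hzw.symm), max_self, nonpos_iff_eq_zero] at h
  obtain ⟨b, hb⟩ := natDegree_eq_zero.mp hz
  refine ⟨b + z, ?_⟩
  rw [← num_div_denom F, hdenom, map_one, div_one, ← algebraMap_C, Polynomial.C_add, hb, hdenom,
    mul_one, sub_add_cancel]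

end Field

section CharZero

variable {K : Type u} [Field K] [CharZero K]

theorem derivative_C_div_X_sub_C_pow (c a : K) (n : ℕ) :
    derivative (algebraMap K[X] (RatFunc K) (Polynomial.C c) /
        algebraMap K[X] (RatFunc K) ((Polynomial.X - Polynomial.C a) ^ (n + 1))) =
      algebraMap K[X] (RatFunc K) (Polynomial.C (-((n + 1) * c))) /
        algebraMap K[X] (RatFunc K) ((Polynomial.X - Polynomial.C a) ^ (n + 2)) := by
  rw [derivative_div_algebraMap _ (pow_ne_zero _ (X_sub_C_ne_zero a)), Polynomial.derivative_C,
    derivative_pow, derivative_X_sub_C, Nat.add_sub_cancel, zero_mul, zero_sub]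
  have hX := algebraMap_ne_zero (X_sub_C_ne_zero a)
  simp only [map_neg, map_mul, map_pow, algebraMap_C, mul_one] at hX ⊢
  generalize algebraMap K[X] (RatFunc K) (Polynomial.X - Polynomial.C a) = d at hX ⊢
  push_cast
  field_simp
  ring

theorem exists_natDegree_denom_add_derivative_lt (f : RatFunc K) {a : K}
    (ha : 2 ≤ f.denom.rootMultiplicity a) :
    ∃ g : RatFunc K, (f + derivative g).denom.natDegree < f.denom.natDegree := by
  obtain ⟨q, hq, hqa⟩ :=
    f.denom.exists_eq_pow_rootMultiplicity_mul_and_not_dvd (denom_ne_zero f) a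
  obtain ⟨n, hn⟩ : ∃ n, f.denom.rootMultiplicity a = n + 2 :=
    ⟨_, (Nat.sub_add_cancel ha).symm⟩
  rw [hn] at hq
  rw [dvd_iff_isRoot] at hqa
  have hq0 : q ≠ 0 := by rintro rfl; simp at hqa
  -- `c` is the coefficient of `(X - a) ^ (-(n + 2))` in the Laurent expansion of `f` at `a`.
  set c := f.num.eval a / q.eval a
  obtain ⟨r, hr⟩ : Polynomial.X - Polynomial.C a ∣ f.num - Polynomial.C c * q := by
    rw [dvd_iff_isRoot]
    simp [c, div_mul_cancel₀ _ hqa]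
  refine ⟨algebraMap K[X] (RatFunc K) (Polynomial.C (c / (n + 1))) /
    algebraMap K[X] (RatFunc K) ((Polynomial.X - Polynomial.C a) ^ (n + 1)), ?_⟩
  have hsum : f + derivative (algebraMap K[X] (RatFunc K) (Polynomial.C (c / (n + 1))) /
      algebraMap K[X] (RatFunc K) ((Polynomial.X - Polynomial.C a) ^ (n + 1))) =
      algebraMap K[X] (RatFunc K) r /
        algebraMap K[X] (RatFunc K) ((Polynomial.X - Polynomial.C a) ^ (n + 1) * q) := by
    have hX := algebraMap_ne_zero (X_sub_C_ne_zero a)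
    have hq0' := algebraMap_ne_zero hq0
    have hr' := congrArg (algebraMap K[X] (RatFunc K)) hr
    rw [derivative_C_div_X_sub_C_pow, mul_div_cancel₀ _ (Nat.cast_add_one_ne_zero n)]
    conv_lhs => rw [← num_div_denom f, hq]
    simp only [map_neg, map_mul, map_pow, algebraMap_C] at hr' ⊢
    generalize algebraMap K[X] (RatFunc K) (Polynomial.X - Polynomial.C a) = d at hX hr' ⊢
    rw [map_sub, map_mul, algebraMap_C] at hr'
    field_simp
    linear_combination d ^ (n + 1) * hr'
  have hden0 : (Polynomial.X - Polynomial.C a) ^ (n + 1) * q ≠ 0 :=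
    mul_ne_zero (pow_ne_zero _ (X_sub_C_ne_zero a)) hq0
  rw [hsum]
  calc _ ≤ ((Polynomial.X - Polynomial.C a) ^ (n + 1) * q).natDegree :=
        natDegree_le_of_dvd (denom_div_dvd r _) hden0
    _ < f.denom.natDegree := by
        rw [hq, natDegree_mul (pow_ne_zero _ (X_sub_C_ne_zero a)) hq0,
          natDegree_mul (pow_ne_zero _ (X_sub_C_ne_zero a)) hq0]
        simp

end CharZero

theorem hasDerivAt_eval (F : RatFunc ℂ) {z : ℂ} (hz : F.denom.eval z ≠ 0) :
    HasDerivAt (fun w ↦ eval (RingHom.id ℂ) w F)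
      (eval (RingHom.id ℂ) z (derivative F)) z := by
  rw [derivative, eval_div_algebraMap _ _ _ (by simpa [eval₂_id] using pow_ne_zero 2 hz)]
  simp only [eval₂_id, eval_pow, eval_sub, Polynomial.eval_mul]
  exact (F.num.hasDerivAt z).div (F.denom.hasDerivAt z) hz

theorem continuousOn_eval {F : RatFunc ℂ} {s : Set ℂ} (hs : ∀ z ∈ s, F.denom.eval z ≠ 0) :
    ContinuousOn (fun w ↦ eval (RingHom.id ℂ) w F) s :=
  fun z hz ↦ (hasDerivAt_eval F (hs z hz)).continuousAt.continuousWithinAt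

def HasZeroResidues (f : RatFunc ℂ) : Prop :=
  ∀ a : ℂ, ∀ᶠ R in 𝓝[>] (0 : ℝ), (∮ z in C(a, R), eval (RingHom.id ℂ) z f) = 0

theorem hasZeroResidues_derivative (F : RatFunc ℂ) : HasZeroResidues (derivative F) := by
  intro a
  filter_upwards [F.denom.eventually_forall_mem_sphere_eval_ne_zero (denom_ne_zero F) a,
    self_mem_nhdsWithin] with R hR hR0
  exact circleIntegral.integral_eq_zero_of_hasDerivWithinAt (le_of_lt hR0) fun z hz ↦
    (hasDerivAt_eval F (hR z hz)).hasDerivWithinAt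

theorem HasZeroResidues.add {f g : RatFunc ℂ} (hf : HasZeroResidues f) (hg : HasZeroResidues g) :
    HasZeroResidues (f + g) := by
  intro a
  filter_upwards [hf a, hg a,
    f.denom.eventually_forall_mem_sphere_eval_ne_zero (denom_ne_zero f) a,
    g.denom.eventually_forall_mem_sphere_eval_ne_zero (denom_ne_zero g) a,
    self_mem_nhdsWithin] with R hfR hgR hf0 hg0 hR0
  have hR : 0 ≤ R := le_of_lt hR0
  rw [circleIntegral.integral_congr hR fun z hz ↦ eval_add _ _ (hf0 z hz) (hg0 z hz),
    circleIntegral.integral_add ((continuousOn_eval hf0).circleIntegrable hR)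
      ((continuousOn_eval hg0).circleIntegrable hR), hfR, hgR, add_zero]

theorem HasZeroResidues.eval_num_eq_zero {f : RatFunc ℂ} (hf : HasZeroResidues f) {a : ℂ}
    {q : ℂ[X]} (hden : f.denom = (Polynomial.X - Polynomial.C a) * q) (hqa : q.eval a ≠ 0) :
    f.num.eval a = 0 := by
  obtain ⟨ε, hε, hqε⟩ := Metric.eventually_nhds_iff_ball.1
    (q.continuous.continuousAt.eventually_ne hqa)
  obtain ⟨R, hR, hRε⟩ := ((hf a).and (Ioo_mem_nhdsGT hε)).exists
  have hq : ∀ z ∈ closedBall a R, q.eval z ≠ 0 :=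
    fun z hz ↦ hqε z (closedBall_subset_ball hRε.2 hz)
  have hcauchy := DifferentiableOn.circleIntegral_sub_inv_smul (c := a)
    (f := fun z ↦ f.num.eval z / q.eval z)
    (fun z hz ↦
      ((f.num.differentiable z).div (q.differentiable z) (hq z hz)).differentiableWithinAt)
    (mem_ball_self hRε.1)
  rw [← circleIntegral.integral_congr hRε.1.le (f := fun z ↦ eval (RingHom.id ℂ) z f), hR]
    at hcauchy
  · simpa [hqa, Real.pi_ne_zero] using hcauchy.symm
  · intro z hz
    have hza : z - a ≠ 0 := sub_ne_zero.2 (ne_of_mem_sphere hz hRε.1.ne')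
    simp only [eval, eval₂_id, hden, Polynomial.eval_mul, eval_sub, Polynomial.eval_X,
      Polynomial.eval_C, smul_eq_mul]
    field_simp

theorem HasZeroResidues.rootMultiplicity_denom_ne_one {f : RatFunc ℂ} (hf : HasZeroResidues f)
    (a : ℂ) : f.denom.rootMultiplicity a ≠ 1 := by
  intro h1
  obtain ⟨q, hq, hqa⟩ :=
    f.denom.exists_eq_pow_rootMultiplicity_mul_and_not_dvd (denom_ne_zero f) a
  rw [h1, pow_one] at hq
  refine eval_num_ne_zero_of_eval_denom_eq_zero f ?_ (hf.eval_num_eq_zero hq ?_)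
  · simp [hq]
  · rwa [dvd_iff_isRoot] at hqa

theorem exists_derivative_eq_of_hasZeroResidues (f : RatFunc ℂ) (hf : HasZeroResidues f) :
    ∃ F, derivative F = f := by
  induction h : f.denom.natDegree using Nat.strong_induction_on generalizing f with
  | _ n ih =>
  rcases eq_or_ne n 0 with rfl | hn
  · obtain ⟨P, hP⟩ := f.num.exists_derivative_eq
    refine ⟨algebraMap ℂ[X] (RatFunc ℂ) P, ?_⟩
    rw [derivative_algebraMap, hP]
    conv_rhs => rw [← num_div_denom f, (monic_denom f).natDegree_eq_zero.mp h, map_one, div_one]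
  · obtain ⟨a, ha⟩ :=
      Complex.exists_root (natDegree_pos_iff_degree_pos.mp (h ▸ Nat.pos_of_ne_zero hn))
    have hmult : 2 ≤ f.denom.rootMultiplicity a := by
      have := (rootMultiplicity_pos (denom_ne_zero f)).2 ha
      have := hf.rootMultiplicity_denom_ne_one a
      omega
    obtain ⟨g, hg⟩ := exists_natDegree_denom_add_derivative_lt f hmult
    obtain ⟨F, hF⟩ :=
      ih _ (h ▸ hg) (f + derivative g) (hf.add (hasZeroResidues_derivative g)) rfl
    exact ⟨F - g, by rw [derivative_sub, hF, add_sub_cancel_right]⟩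

section IsAlgClosed

variable {K : Type u} [Field K] [IsAlgClosed K]

theorem exists_eval_eq_of_natDegree_ne_zero (F : RatFunc K) {z : K}
    (hz : (F.num - Polynomial.C z * F.denom).natDegree ≠ 0) :
    ∃ a, F.denom.eval a ≠ 0 ∧ eval (RingHom.id K) a F = z := by
  obtain ⟨a, ha⟩ := IsAlgClosed.exists_root _ (mt natDegree_eq_of_degree_eq_some hz)
  have ha : F.num.eval a = z * F.denom.eval a := by
    simpa [sub_eq_zero] using ha
  have hden : F.denom.eval a ≠ 0 := fun h ↦
    eval_num_ne_zero_of_eval_denom_eq_zero F h (by rw [ha, h, mul_zero])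
  refine ⟨a, hden, ?_⟩
  rw [eval, eval₂_id, eval₂_id, ha, mul_div_cancel_right₀ _ hden]

theorem setOf_not_exists_eval_eq_subsingleton {F : RatFunc K} (hF : ¬ ∃ c, F = C c) :
    {z | ¬ ∃ a, F.denom.eval a ≠ 0 ∧ eval (RingHom.id K) a F = z}.Subsingleton := by
  intro z hz w hw
  by_contra hzw
  refine hF (exists_eq_C_of_natDegree_eq_zero hzw ?_ ?_)
  · exact not_not.mp fun h ↦ hz (exists_eval_eq_of_natDegree_ne_zero F h)
  · exact not_not.mp fun h ↦ hw (exists_eval_eq_of_natDegree_ne_zero F h)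

end IsAlgClosed

end RatFunc

/-- Let `f` be a nonzero rational function on `ℂ` all of whose poles have zero residue
(equivalently, the integral of `f` over every sufficiently small circle vanishes).  Then `f`
has a primitive `F` which is itself a rational function; `F` is non-constant, and the image
of `a ↦ F(a)` over the points where `F` is defined omits at most one complex value. -/
theorem stmt_8 (f : RatFunc ℂ) (hf : f ≠ 0)
    (hres : ∀ a : ℂ, ∀ᶠ R in 𝓝[>] (0 : ℝ),
      (∮ z in C(a, R), RatFunc.eval (RingHom.id ℂ) z f) = 0) :
    ∃ F : RatFunc ℂ,
      (¬ ∃ c : ℂ, F = RatFunc.C c) ∧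
      (∀ z : ℂ, Polynomial.eval z F.denom ≠ 0 →
        HasDerivAt (fun w : ℂ => RatFunc.eval (RingHom.id ℂ) w F)
          (RatFunc.eval (RingHom.id ℂ) z f) z) ∧
      {z : ℂ | ¬ ∃ a : ℂ, Polynomial.eval a F.denom ≠ 0 ∧
          RatFunc.eval (RingHom.id ℂ) a F = z}.Subsingleton := by
  obtain ⟨F, hF⟩ := RatFunc.exists_derivative_eq_of_hasZeroResidues f hres
  have hnc : ¬ ∃ c : ℂ, F = RatFunc.C c := by
    rintro ⟨c, rfl⟩
    exact hf (by rw [← hF, RatFunc.derivative_C])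
  exact ⟨F, hnc, fun z hz ↦ hF ▸ RatFunc.hasDerivAt_eval F hz,
    RatFunc.setOf_not_exists_eval_eq_subsingleton hnc⟩
end

section
/- Let F, G be non-constant polynomials over an algebraically closed field k, and suppose the affine curves C_F = closure of {(F₀(x),...,F_{n−1}(x)) : x ∈ k} and C_G = closure of {(G₀(x),...,G_{n−1}(x)) : x ∈ k} in kⁿ satisfy C_F = v − C_G for infinitely many vectors v ∈ kⁿ. Then the additive symmetry group H = {v ∈ kⁿ : C_F = v + C_F} is infinite, and being an algebraic subgroup of (kⁿ,+) of dimension at most 1 containing infinitely many points, H is a line through the origin; consequently C_F is a translate of a line. -/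
noncomputable def vIdeal' {k : Type*} [Field k] {n : ℕ} (S : Set (Fin n → k)) :
    Ideal (MvPolynomial (Fin n) k) where
  carrier := {p | ∀ x ∈ S, MvPolynomial.eval x p = 0}
  add_mem' := by
    intro a b ha hb x hx
    simp [map_add, ha x hx, hb x hx]
  zero_mem' := by
    intro x hx
    simp
  smul_mem' := by
    intro c p hp x hx
    simp [smul_eq_mul, hp x hx]

/-- The Zariski closure of a subset of affine `n`-space: the zero set of its vanishing
ideal. -/
def zcl {k : Type*} [Field k] {n : ℕ} (S : Set (Fin n → k)) : Set (Fin n → k) :=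
  {x | ∀ p ∈ vIdeal' S, MvPolynomial.eval x p = 0}

/-! Two vectors `v₁ ≠ v₂` with `C_F = vᵢ - C_G` give a nonzero translation `w = v₁ - v₂`
preserving `C_F`. For `q` vanishing on `C_F` and `s ∈ C_F`, `c ↦ q (s + c • w)` is a polynomial
vanishing on `ℕ`, so in characteristic zero `C_F` is stable under the whole line `k ∙ w`.
A linear form killing `w` is then constant on `C_F`, so `C_F` is the line through `F(0)` in
direction `w`, and the stabilizer of that line is `k ∙ w`. -/

open Polynomial
open scoped Pointwise

theorem Polynomial.eval_mvPolynomial_aeval {R σ : Type*} [CommRing R] (F : σ → R[X])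
    (q : MvPolynomial σ R) (x : R) :
    (MvPolynomial.aeval F q).eval x = MvPolynomial.eval (fun i => (F i).eval x) q := by
  rw [← coe_aeval_eq_eval, ← AlgHom.comp_apply, MvPolynomial.comp_aeval]
  rfl

theorem MvPolynomial.eval_aeval {R σ τ : Type*} [CommRing R] (F : σ → MvPolynomial τ R)
    (q : MvPolynomial σ R) (x : τ → R) :
    eval x (aeval F q) = eval (fun i => eval x (F i)) q := by
  rw [aeval_eq_bind₁]
  exact eval₂Hom_bind₁ _ _ _ _

theorem Polynomial.infinite_range_eval {R : Type*} [CommRing R] [IsDomain R] [Infinite R]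
    {p : R[X]} (hp : 0 < p.natDegree) : (Set.range fun x => p.eval x).Infinite := by
  intro hfin
  refine Set.infinite_univ (α := R) ?_
  rw [← Set.preimage_range fun x => p.eval x]
  refine hfin.preimage' fun a _ => ?_
  have hpa : p - C a ≠ 0 := fun h => by
    rw [sub_eq_zero] at h
    simp [h] at hp
  have := finite_setOfPred_isRoot hpa
  simp only [IsRoot, eval_sub, eval_C, sub_eq_zero] at this
  exact this

theorem Polynomial.not_algebraicIndependent_pair {R : Type*} [CommRing R] [IsDomain R]
    (f g : R[X]) : ¬ AlgebraicIndependent R ![f, g] := fun h => by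
  simpa [trdeg_of_isDomain] using h.lift_cardinalMk_le_trdeg

theorem MvPolynomial.eq_zero_of_eval_eq_zero_of_infinite {R : Type*} [CommRing R] [IsDomain R]
    [Infinite R] {P : MvPolynomial (Fin 2) R} {A : Set R} (hA : A.Infinite)
    (h : ∀ a ∈ A, ∀ b, eval ![a, b] P = 0) : P = 0 :=
  funext_set ![A, Set.univ] (fun i => by fin_cases i <;> simp [hA, Set.infinite_univ])
    fun x hx => by
      rw [map_zero, show x = ![x 0, x 1] from by ext i; fin_cases i <;> rfl]
      exact h _ (hx 0 trivial) _

theorem AddAction.sub_mem_stabilizer_of_eq_image_sub {V : Type*} [AddCommGroup V]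
    {Z X : Set V} {v₁ v₂ : V} (h₁ : Z = (v₁ - ·) '' X) (h₂ : Z = (v₂ - ·) '' X) :
    v₁ - v₂ ∈ stabilizer V Z := by
  rw [mem_stabilizer_iff]
  calc (v₁ - v₂) +ᵥ Z = (v₁ - v₂ + ·) '' ((v₂ - ·) '' X) := by rw [← Set.image_vadd, ← h₂]; rfl
    _ = Z := by rw [h₁, Set.image_image]; simp_rw [sub_add_sub_cancel]

theorem AddAction.stabilizer_range_add_smul {R V : Type*} [Ring R] [AddCommGroup V]
    [Module R V] (p w : V) :
    (stabilizer V (Set.range fun c : R => p + c • w) : Set V) = Set.range fun c : R => c • w := by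
  ext v
  simp only [SetLike.mem_coe, mem_stabilizer_set, Set.mem_range, vadd_eq_add]
  constructor
  · intro hv
    obtain ⟨c, hc⟩ := (hv p).mpr ⟨0, by simp⟩
    exact ⟨c, by rw [← add_right_cancel_iff (a := p), ← hc, add_comm]⟩
  · rintro ⟨c, rfl⟩ y
    constructor
    · rintro ⟨d, hd⟩
      exact ⟨d - c, by rw [sub_smul, ← add_sub_assoc, hd]; abel⟩
    · rintro ⟨d, rfl⟩
      exact ⟨c + d, by rw [add_smul]; abel⟩

section

variable {k : Type*} [Field k] {n : ℕ}

theorem subset_zcl (S : Set (Fin n → k)) : S ⊆ zcl S := fun _ hx _ hp => hp _ hx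

theorem eval_eq_of_mem_zcl {S : Set (Fin n → k)} {L : MvPolynomial (Fin n) k} {a : k}
    (hS : ∀ s ∈ S, MvPolynomial.eval s L = a) {y : Fin n → k} (hy : y ∈ zcl S) :
    MvPolynomial.eval y L = a := by
  have hmem : L - MvPolynomial.C a ∈ vIdeal' S := fun s hs => by simp [hS s hs]
  simpa [sub_eq_zero] using hy _ hmem

theorem smul_mem_stabilizer_zcl [CharZero k] {S : Set (Fin n → k)} {w : Fin n → k}
    (hw : w ∈ AddAction.stabilizer (Fin n → k) (zcl S)) (c : k) :
    c • w ∈ AddAction.stabilizer (Fin n → k) (zcl S) := by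
  have key : ∀ c : k, ∀ s ∈ zcl S, c • w + s ∈ zcl S := by
    intro c s hs q hq
    set r : k[X] := MvPolynomial.aeval (fun t => C (w t) * X + C (s t)) q
    have hr : ∀ c : k, r.eval c = MvPolynomial.eval (c • w + s) q := fun c => by
      rw [eval_mvPolynomial_aeval]
      refine congrArg (MvPolynomial.eval · q) (funext fun t => ?_)
      simp only [eval_add, eval_mul, eval_C, eval_X, Pi.add_apply, Pi.smul_apply, smul_eq_mul]
      ring
    have hr0 : r = 0 := by
      refine eq_zero_of_infinite_isRoot _
        ((Set.infinite_range_of_injective Nat.cast_injective).mono ?_)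
      rintro _ ⟨m, rfl⟩
      have hm : m • w + s ∈ zcl S :=
        (AddAction.mem_stabilizer_set.mp (AddSubgroup.nsmul_mem _ hw m) s).mpr hs
      change eval (m : k) r = 0
      rw [hr, Nat.cast_smul_eq_nsmul]
      exact hm q hq
    rw [← hr, hr0, eval_zero]
  refine AddAction.mem_stabilizer_set.mpr fun s => ⟨fun hs => ?_, key c s⟩
  simpa using key (-c) _ hs

/-- Along the curve, `L` and the coordinate `j` satisfy a polynomial relation `P`; since the
closure is a union of lines in direction `w`, on which `L` is constant and `y j` takes every
value, `P` vanishes on `(L ∘ F)(k) × k`, so `L ∘ F` takes finitely many values. -/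
theorem natDegree_aeval_eq_zero_of_invariant [Infinite k] {F : Fin n → k[X]} {w : Fin n → k}
    {j : Fin n} (hwj : w j ≠ 0)
    (hw : ∀ c : k, c • w ∈ AddAction.stabilizer (Fin n → k)
      (zcl (Set.range fun x i => (F i).eval x)))
    {L : MvPolynomial (Fin n) k} (hL : ∀ (c : k) y, MvPolynomial.eval (c • w + y) L =
      MvPolynomial.eval y L) :
    (MvPolynomial.aeval F L).natDegree = 0 := by
  set φ := MvPolynomial.aeval F L
  by_contra hφ
  have hdep := not_algebraicIndependent_pair φ (F j)
  rw [algebraicIndependent_iff_injective_aeval, injective_iff_map_eq_zero] at hdep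
  push Not at hdep
  obtain ⟨P, hP, hP0⟩ := hdep
  set Q := MvPolynomial.aeval ![L, MvPolynomial.X j] P
  have hQ : ∀ z, MvPolynomial.eval z Q = MvPolynomial.eval ![MvPolynomial.eval z L, z j] P := by
    intro z
    rw [MvPolynomial.eval_aeval]
    congr 2 with i
    fin_cases i <;> simp
  have hQS : Q ∈ vIdeal' (Set.range fun x i => (F i).eval x) := by
    rintro _ ⟨x, rfl⟩
    have hPx := congrArg (eval x) hP
    rw [eval_mvPolynomial_aeval, eval_zero] at hPx
    rw [hQ, ← hPx]
    congr 2 with i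
    fin_cases i <;> simp [φ, eval_mvPolynomial_aeval]
  refine hP0 (MvPolynomial.eq_zero_of_eval_eq_zero_of_infinite (infinite_range_eval
    (Nat.pos_of_ne_zero hφ)) ?_)
  rintro _ ⟨x, rfl⟩ b
  set z : Fin n → k := fun i => (F i).eval x
  have hz : ((b - z j) / w j) • w + z ∈ zcl (Set.range fun x i => (F i).eval x) :=
    (AddAction.mem_stabilizer_set.mp (hw _) z).mpr (subset_zcl _ ⟨x, rfl⟩)
  have := hz Q hQS
  rw [hQ, hL] at this
  have hv : ![eval x φ, b] = ![MvPolynomial.eval z L, (((b - z j) / w j) • w + z) j] := by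
    ext i
    fin_cases i
    · simp [φ, z, eval_mvPolynomial_aeval]
    · simp [hwj]
  rwa [hv]

theorem zcl_range_eq_line [Infinite k] {F : Fin n → k[X]} {w : Fin n → k} (hw0 : w ≠ 0)
    (hw : ∀ c : k, c • w ∈ AddAction.stabilizer (Fin n → k)
      (zcl (Set.range fun x i => (F i).eval x))) :
    zcl (Set.range fun x i => (F i).eval x) =
      Set.range fun c : k => (fun i => (F i).eval 0) + c • w := by
  set p : Fin n → k := fun i => (F i).eval 0
  obtain ⟨j, hj⟩ : ∃ j, w j ≠ 0 := Function.ne_iff.mp hw0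
  refine (Set.range_subset_iff.mpr fun c => ?_).antisymm' fun y hy => ?_
  · rw [add_comm]
    exact (AddAction.mem_stabilizer_set.mp (hw c) p).mpr (subset_zcl _ ⟨0, rfl⟩)
  have hlin : ∀ t, w j * y t - w t * y j = w j * p t - w t * p j := fun t => by
    set L : MvPolynomial (Fin n) k :=
      MvPolynomial.C (w j) * MvPolynomial.X t - MvPolynomial.C (w t) * MvPolynomial.X j
    have hL : ∀ (c : k) y, MvPolynomial.eval (c • w + y) L = MvPolynomial.eval y L := by
      intro c y
      simp only [L, map_sub, map_mul, MvPolynomial.eval_C, MvPolynomial.eval_X, Pi.add_apply,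
        Pi.smul_apply, smul_eq_mul]
      ring
    have hconst := eq_C_of_natDegree_eq_zero (natDegree_aeval_eq_zero_of_invariant hj hw hL)
    have hLy := eval_eq_of_mem_zcl (L := L) (a := MvPolynomial.eval p L) (fun s hs => ?_) hy
    · simpa [L] using hLy
    obtain ⟨x, rfl⟩ := hs
    rw [← eval_mvPolynomial_aeval, ← eval_mvPolynomial_aeval, hconst, eval_C, eval_C]
  refine ⟨(y j - p j) / w j, funext fun t => ?_⟩
  simp only [Pi.add_apply, Pi.smul_apply, smul_eq_mul]
  field_simp
  linear_combination -hlin t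

end

theorem stmt_16_general {k : Type*} [Field k] [CharZero k] (n : ℕ)
    (F G : Fin n → Polynomial k)
    (hsym : {v : Fin n → k |
        zcl {y : Fin n → k | ∃ x : k, y = fun i => (F i).eval x} =
          (fun u : Fin n → k => v - u) ''
            zcl {y : Fin n → k | ∃ x : k, y = fun i => (G i).eval x}}.Infinite) :
    {v : Fin n → k |
        zcl {y : Fin n → k | ∃ x : k, y = fun i => (F i).eval x} =
          (fun u : Fin n → k => v + u) ''
            zcl {y : Fin n → k | ∃ x : k, y = fun i => (F i).eval x}}.Infinite ∧
    ∃ w : Fin n → k, w ≠ 0 ∧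
      {v : Fin n → k |
          zcl {y : Fin n → k | ∃ x : k, y = fun i => (F i).eval x} =
            (fun u : Fin n → k => v + u) ''
              zcl {y : Fin n → k | ∃ x : k, y = fun i => (F i).eval x}} =
        Set.range (fun c : k => c • w) ∧
      ∃ v₀ : Fin n → k,
        zcl {y : Fin n → k | ∃ x : k, y = fun i => (F i).eval x} =
          Set.range (fun c : k => v₀ + c • w) := by
  have hCF : zcl {y : Fin n → k | ∃ x : k, y = fun i => (F i).eval x} =
      zcl (Set.range fun x i => (F i).eval x) := by
    simp only [Set.range, eq_comm]
  have hH : ∀ Z : Set (Fin n → k), {v : Fin n → k | Z = (fun u => v + u) '' Z} =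
      AddAction.stabilizer (Fin n → k) Z := fun Z => by
    ext v
    rw [SetLike.mem_coe, AddAction.mem_stabilizer_iff, ← Set.image_vadd, eq_comm]
    rfl
  obtain ⟨v₁, h₁, v₂, h₂, hne⟩ := hsym.nontrivial
  have hw0 : v₁ - v₂ ≠ 0 := sub_ne_zero.mpr hne
  have hw := AddAction.sub_mem_stabilizer_of_eq_image_sub h₁ h₂
  rw [hCF] at hw
  have hline := zcl_range_eq_line hw0 (smul_mem_stabilizer_zcl hw)
  have hHline : {v : Fin n → k | zcl {y : Fin n → k | ∃ x : k, y = fun i => (F i).eval x} =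
      (fun u => v + u) '' zcl {y : Fin n → k | ∃ x : k, y = fun i => (F i).eval x}} =
      Set.range fun c : k => c • (v₁ - v₂) := by
    rw [hH, hCF, hline, AddAction.stabilizer_range_add_smul]
  exact ⟨hHline ▸ Set.infinite_range_of_injective (smul_left_injective k hw0), v₁ - v₂, hw0,
    hHline, _, hCF.trans hline⟩

/-- Let `C_F` and `C_G` be the Zariski closures of the parametrized curves
`x ↦ (F₀(x),…,F_{n−1}(x))` and `x ↦ (G₀(x),…,G_{n−1}(x))` in `kⁿ`, with the `F_i` (and
`G_i`) not all constant.  If `C_F = v − C_G` for infinitely many `v ∈ kⁿ`, then the additive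
symmetry group `H = {v : C_F = v + C_F}` is infinite; being an algebraic subgroup of
`(kⁿ,+)` of dimension at most one containing infinitely many points, it is a line through
the origin, and `C_F` is a translate of that line. -/
theorem stmt_16 {k : Type*} [Field k] [IsAlgClosed k] [CharZero k] (n : ℕ)
    (F G : Fin n → Polynomial k)
    (hF : ∃ i, 0 < (F i).natDegree) (hG : ∃ i, 0 < (G i).natDegree)
    (hsym : {v : Fin n → k |
        zcl {y : Fin n → k | ∃ x : k, y = fun i => (F i).eval x} =
          (fun u : Fin n → k => v - u) ''
            zcl {y : Fin n → k | ∃ x : k, y = fun i => (G i).eval x}}.Infinite) :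
    {v : Fin n → k |
        zcl {y : Fin n → k | ∃ x : k, y = fun i => (F i).eval x} =
          (fun u : Fin n → k => v + u) ''
            zcl {y : Fin n → k | ∃ x : k, y = fun i => (F i).eval x}}.Infinite ∧
    ∃ w : Fin n → k, w ≠ 0 ∧
      {v : Fin n → k |
          zcl {y : Fin n → k | ∃ x : k, y = fun i => (F i).eval x} =
            (fun u : Fin n → k => v + u) ''
              zcl {y : Fin n → k | ∃ x : k, y = fun i => (F i).eval x}} =
        Set.range (fun c : k => c • w) ∧
      ∃ v₀ : Fin n → k,
        zcl {y : Fin n → k | ∃ x : k, y = fun i => (F i).eval x} =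
          Set.range (fun c : k => v₀ + c • w) :=
  stmt_16_general n F G hsym
end
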